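/- arXiv:2003.04233 — 4 statements merged into one kernel-verified Lean document; each statement's English description precedes it below -/
import Mathlib

section
/- Let k be a field of characteristic p ≥ 5 and A = k[x,y]/(x^p, y^p). Define derivations of A: e = x∂_y, h = x∂_x - y∂_y, f = y∂_x + 2^{-1}·x^{p-1}y^2·∂_y. Then [h,e] = 2e, [h,f] = -2f, and [e,f] = h, i.e. (e,h,f) is an sl₂-triple inside Der(A). -/
open MvPolynomial

set_option synthInstance.maxHeartbeats 1000000
set_option maxHeartbeats 1000000

/-- The ideal `(x^p, y^p)` of `k[x,y]`. -/
noncomputable abbrev TruncIdeal (k : Type*) [Field k] (p : ℕ) : Ideal (MvPolynomial (Fin 2) k) :=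
  Ideal.span {X 0 ^ p, X 1 ^ p}

/-- The truncated polynomial algebra `A = k[x,y]/(x^p, y^p)`. -/
noncomputable abbrev TruncA (k : Type*) [Field k] (p : ℕ) :=
  MvPolynomial (Fin 2) k ⧸ TruncIdeal k p

/-- The quotient map `k[x,y] → A`. -/
noncomputable abbrev tmk (k : Type*) [Field k] (p : ℕ) :
    MvPolynomial (Fin 2) k →+* TruncA k p := Ideal.Quotient.mk (TruncIdeal k p)

lemma pderiv_swap {σ R : Type*} [CommSemiring R] [DecidableEq σ] (i j : σ)
    (g : MvPolynomial σ R) : pderiv i (pderiv j g) = pderiv j (pderiv i g) := by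
  induction g using MvPolynomial.induction_on with
  | C a => simp [pderiv_C]
  | add p q hp hq => simp [hp, hq]
  | mul_X p n hp =>
      simp [pderiv_mul, hp, pderiv_X, Pi.single_apply, apply_ite (pderiv i),
        apply_ite (pderiv j), pderiv_one]; ring

/-- `(e, h, f) = (x∂_y, x∂_x - y∂_y, y∂_x + 2⁻¹x^{p-1}y²∂_y)` is an `sl₂`-triple in
`Der(A)` for `A = k[x,y]/(x^p,y^p)`, char `p ≥ 5`. -/
theorem stmt5 {k : Type*} [Field k] (p : ℕ) [Fact p.Prime] (hp : 5 ≤ p) [CharP k p]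
    (e h f : Derivation k (TruncA k p) (TruncA k p))
    (he : ∀ g, e (tmk k p g) = tmk k p (X 0 * pderiv 1 g))
    (hh : ∀ g, h (tmk k p g) = tmk k p (X 0 * pderiv 0 g - X 1 * pderiv 1 g))
    (hf : ∀ g, f (tmk k p g)
        = tmk k p (X 1 * pderiv 0 g + C (2⁻¹ : k) * (X 0 ^ (p - 1) * X 1 ^ 2 * pderiv 1 g))) :
    ⁅h, e⁆ = (2 : k) • e ∧ ⁅h, f⁆ = (-2 : k) • f ∧ ⁅e, f⁆ = h := by
  obtain ⟨q, rfl⟩ : ∃ q, p = q + 5 := ⟨p - 5, by omega⟩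
  have hsmul : ∀ (c : k) (P : MvPolynomial (Fin 2) k),
      c • (tmk k (q+5) P) = tmk k (q+5) (C c * P) := by
    intro c P
    rw [← smul_eq_C_mul]
    exact (map_smul (Ideal.Quotient.mkₐ k (TruncIdeal k (q+5))) c P).symm
  have hq5 : ((q : ℕ) : MvPolynomial (Fin 2) k) + 5 = 0 := by
    have h0 : ((q + 5 : ℕ) : k) = 0 := CharP.cast_eq_zero k (q+5)
    have : ((q + 5 : ℕ) : MvPolynomial (Fin 2) k) = C ((q+5 : ℕ) : k) := by
      rw [map_natCast (C : k →+* MvPolynomial (Fin 2) k)]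
    rw [h0, map_zero] at this
    push_cast at this
    exact this
  have h2 : (2 : k) ≠ 0 := by
    intro h0
    have : ((2:ℕ) : k) = 0 := by exact_mod_cast h0
    have := (CharP.cast_eq_zero_iff k (q+5) 2).mp this
    have := Nat.le_of_dvd (by norm_num) this
    omega
  have hc : (C (2⁻¹:k) : MvPolynomial (Fin 2) k) * 2 = 1 := by
    rw [← map_ofNat (C : k →+* MvPolynomial (Fin 2) k) 2, ← map_mul,
      inv_mul_cancel₀ h2, map_one]
  have hd : (q + 5 - 1 : ℕ) = q + 4 := by omega
  refine ⟨?_, ?_, ?_⟩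
  · apply Derivation.ext; intro a
    obtain ⟨g, rfl⟩ := Ideal.Quotient.mk_surjective a
    simp only [Derivation.commutator_apply, he, hh, Derivation.smul_apply, hsmul]
    rw [← map_sub]
    congr 1
    simp only [pderiv_mul, pderiv_X_self, pderiv_X_of_ne (show (1:Fin 2) ≠ 0 by decide),
      pderiv_X_of_ne (show (0:Fin 2) ≠ 1 by decide), map_sub, map_mul,
      pderiv_swap 1 0 g, map_ofNat]
    ring
  · apply Derivation.ext; intro a
    obtain ⟨g, rfl⟩ := Ideal.Quotient.mk_surjective a
    simp only [Derivation.commutator_apply, hf, hh, Derivation.smul_apply, hsmul, hd]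
    rw [← map_sub]
    congr 1
    simp only [pderiv_mul, pderiv_pow, pderiv_X_self,
      pderiv_X_of_ne (show (1:Fin 2) ≠ 0 by decide),
      pderiv_X_of_ne (show (0:Fin 2) ≠ 1 by decide), map_sub, map_add, map_mul, map_neg,
      pderiv_swap 1 0 g, map_ofNat, pderiv_C_mul, pderiv_C]
    push_cast
    linear_combination (C (2⁻¹:k) * X 0 ^ (q+4) * X 1^2 * pderiv 1 g) * hq5
  · apply Derivation.ext; intro a
    obtain ⟨g, rfl⟩ := Ideal.Quotient.mk_surjective a
    simp only [Derivation.commutator_apply, he, hf, hh, hsmul, hd]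
    rw [← map_sub, Ideal.Quotient.eq]
    simp only [TruncIdeal, Ideal.mem_span_pair]
    refine ⟨X 1 * pderiv 1 g, 0, ?_⟩
    simp only [pderiv_mul, pderiv_pow, pderiv_X_self,
      pderiv_X_of_ne (show (1:Fin 2) ≠ 0 by decide),
      pderiv_X_of_ne (show (0:Fin 2) ≠ 1 by decide), map_sub, map_add, map_mul,
      pderiv_swap 1 0 g, pderiv_C_mul, pderiv_C]
    push_cast
    linear_combination (-(X 0 ^ (q+5) * X 1 * pderiv 1 g)) * hc
end

section
/- Let k be a field of characteristic p ≥ 5 and A = k[x,y]/(x^p, y^p). Let D be the derivation of A given by D = ∂_x + x^{p-1} y ∂_y. Then the p-fold composition D^p (as a k-linear endomorphism of A) equals -y∂_y. In particular, D^p is again a derivation of A. -/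
open MvPolynomial

/-!
On `x^a y^b` with `a < p` the twisting term `x^{p-1} y ∂_y` is killed by `x^p = 0` as long as
the `x`-degree is positive, so `D^a` just differentiates down to `a! y^b`; then
`D (y^b) = b x^{p-1} y^b`, and `D^{p-1-a}` differentiates back down to `x^a`. Altogether `D^p`
multiplies `x^a y^b` by `a! · b · (p-1)!/a! = b (p-1)!`, which is `-b` by Wilson's theorem.
-/

section MonomialDerivatives

variable {R : Type*} [CommSemiring R]

theorem pderiv_zero_X_zero_pow_mul_X_one_pow (a b : ℕ) :
    pderiv 0 (X 0 ^ a * X 1 ^ b : MvPolynomial (Fin 2) R) = a • (X 0 ^ (a - 1) * X 1 ^ b) := by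
  simp only [Derivation.leibniz, Derivation.leibniz_pow, pderiv_X, Pi.single_eq_same,
    Pi.single_eq_of_ne one_ne_zero, smul_eq_mul, mul_zero, mul_one, nsmul_eq_mul,
    zero_add]
  ring

theorem X_one_mul_pderiv_one_X_zero_pow_mul_X_one_pow (a b : ℕ) :
    X 1 * pderiv 1 (X 0 ^ a * X 1 ^ b : MvPolynomial (Fin 2) R) = b • (X 0 ^ a * X 1 ^ b) := by
  rcases b.eq_zero_or_pos with rfl | hb
  · simp
  · obtain ⟨c, rfl⟩ := Nat.exists_eq_add_of_lt hb
    simp only [Derivation.leibniz, Derivation.leibniz_pow, pderiv_X, Pi.single_eq_same,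
      Pi.single_eq_of_ne zero_ne_one, smul_eq_mul, mul_zero, mul_one, nsmul_eq_mul,
      add_zero]
    simp only [zero_add, add_tsub_cancel_right, pow_succ, Nat.cast_add, Nat.cast_one]
    ring

end MonomialDerivatives

theorem natCast_factorial_pred_eq_neg_one {k : Type*} [Ring k] (p : ℕ) [Fact p.Prime]
    [CharP k p] : ((p - 1).factorial : k) = -1 := by
  have := congrArg (ZMod.castHom (dvd_refl p) k) (ZMod.wilsons_lemma (p := p))
  rwa [map_neg, map_one, map_natCast] at this

section TruncA

variable {k : Type*} [Field k] {p : ℕ}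

theorem tmk_X_zero_pow_mul_X_one_pow_of_le {a : ℕ} (ha : p ≤ a) (b : ℕ) :
    tmk k p (X 0 ^ a * X 1 ^ b) = 0 := by
  obtain ⟨c, rfl⟩ := Nat.exists_eq_add_of_le ha
  rw [pow_add, mul_assoc, map_mul, Ideal.Quotient.eq_zero_iff_mem.mpr
    (Ideal.subset_span (Set.mem_insert _ _)), zero_mul]

theorem TruncA.linearMap_ext {M : Type*} [AddCommGroup M] [Module k M]
    {f g : TruncA k p →ₗ[k] M}
    (h : ∀ a b : ℕ, f (tmk k p (X 0 ^ a * X 1 ^ b)) = g (tmk k p (X 0 ^ a * X 1 ^ b))) :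
    f = g := by
  refine LinearMap.ext fun v => ?_
  obtain ⟨q, rfl⟩ := Ideal.Quotient.mk_surjective v
  induction q using MvPolynomial.induction_on' with
  | add q r hq hr => rw [map_add, map_add, map_add, hq, hr]
  | monomial s c =>
    have hs : monomial s c = C c * (X 0 ^ s 0 * X 1 ^ s 1 : MvPolynomial (Fin 2) k) := by
      rw [monomial_eq, Finsupp.prod_fintype _ _ fun i => pow_zero _, Fin.prod_univ_two]
    have hmk : tmk k p (c • (X 0 ^ s 0 * X 1 ^ s 1)) = c • tmk k p (X 0 ^ s 0 * X 1 ^ s 1) :=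
      map_smul (Ideal.Quotient.mkₐ k (TruncIdeal k p)) c _
    rw [hs, ← smul_eq_C_mul, hmk, map_smul, map_smul, h]

end TruncA

section TwistedDerivation

variable {k : Type*} [Field k] {p : ℕ} {D : Module.End k (TruncA k p)}

theorem D_apply_X_zero_pow_mul_X_one_pow
    (hD : ∀ f, D (tmk k p f) = tmk k p (pderiv 0 f + X 0 ^ (p - 1) * X 1 * pderiv 1 f))
    (a b : ℕ) :
    D (tmk k p (X 0 ^ a * X 1 ^ b)) =
      a • tmk k p (X 0 ^ (a - 1) * X 1 ^ b) + b • tmk k p (X 0 ^ (p - 1 + a) * X 1 ^ b) := by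
  rw [hD, mul_assoc, X_one_mul_pderiv_one_X_zero_pow_mul_X_one_pow,
    pderiv_zero_X_zero_pow_mul_X_one_pow, mul_smul_comm, ← mul_assoc, ← pow_add,
    map_add, map_nsmul, map_nsmul]

theorem D_apply_X_zero_pow_mul_X_one_pow_of_pos
    (hD : ∀ f, D (tmk k p f) = tmk k p (pderiv 0 f + X 0 ^ (p - 1) * X 1 * pderiv 1 f))
    {a : ℕ} (ha : 0 < a) (b : ℕ) :
    D (tmk k p (X 0 ^ a * X 1 ^ b)) = a • tmk k p (X 0 ^ (a - 1) * X 1 ^ b) := by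
  rw [D_apply_X_zero_pow_mul_X_one_pow hD,
    tmk_X_zero_pow_mul_X_one_pow_of_le (a := p - 1 + a) (by omega), smul_zero, add_zero]

theorem D_apply_X_one_pow
    (hD : ∀ f, D (tmk k p f) = tmk k p (pderiv 0 f + X 0 ^ (p - 1) * X 1 * pderiv 1 f))
    (b : ℕ) :
    D (tmk k p (X 0 ^ 0 * X 1 ^ b)) = b • tmk k p (X 0 ^ (p - 1) * X 1 ^ b) := by
  rw [D_apply_X_zero_pow_mul_X_one_pow hD, zero_smul, zero_add, add_zero]

theorem D_pow_apply_X_zero_pow_mul_X_one_pow_of_le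
    (hD : ∀ f, D (tmk k p f) = tmk k p (pderiv 0 f + X 0 ^ (p - 1) * X 1 * pderiv 1 f))
    {n a : ℕ} (hn : n ≤ a) (b : ℕ) :
    (D ^ n) (tmk k p (X 0 ^ a * X 1 ^ b)) =
      a.descFactorial n • tmk k p (X 0 ^ (a - n) * X 1 ^ b) := by
  induction n generalizing a with
  | zero => simp
  | succ n ih =>
    obtain ⟨a, rfl⟩ := Nat.exists_eq_add_of_lt (Nat.zero_lt_of_lt hn)
    rw [pow_succ, Module.End.mul_apply, D_apply_X_zero_pow_mul_X_one_pow_of_pos hD (by omega),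
      map_nsmul, zero_add, add_tsub_cancel_right, ih (by omega), smul_smul,
      Nat.succ_descFactorial_succ, Nat.add_sub_add_right]

theorem D_pow_prime_apply_X_zero_pow_mul_X_one_pow [Fact p.Prime] [CharP k p]
    (hD : ∀ f, D (tmk k p f) = tmk k p (pderiv 0 f + X 0 ^ (p - 1) * X 1 * pderiv 1 f))
    (a b : ℕ) :
    (D ^ p) (tmk k p (X 0 ^ a * X 1 ^ b)) = -(b • tmk k p (X 0 ^ a * X 1 ^ b)) := by
  rcases le_or_gt p a with hpa | hap
  · simp [tmk_X_zero_pow_mul_X_one_pow_of_le hpa]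
  have hsplit : D ^ p = D ^ (p - 1 - a) * D * D ^ a := by
    rw [mul_assoc, ← pow_succ', ← pow_add]
    congr 1
    omega
  have hcoeff : a.factorial * b * (p - 1).descFactorial (p - 1 - a) = (p - 1).factorial * b := by
    rw [← Nat.factorial_mul_descFactorial (by omega : p - 1 - a ≤ p - 1),
      show p - 1 - (p - 1 - a) = a by omega]
    ring
  rw [hsplit, Module.End.mul_apply, Module.End.mul_apply,
    D_pow_apply_X_zero_pow_mul_X_one_pow_of_le hD le_rfl, Nat.sub_self, map_nsmul,
    D_apply_X_one_pow hD, map_nsmul, map_nsmul,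
    D_pow_apply_X_zero_pow_mul_X_one_pow_of_le hD (by omega : p - 1 - a ≤ p - 1),
    show p - 1 - (p - 1 - a) = a by omega, smul_smul, smul_smul, Nat.descFactorial_self,
    hcoeff, mul_smul, ← Nat.cast_smul_eq_nsmul k, natCast_factorial_pred_eq_neg_one, neg_one_smul]

end TwistedDerivation

theorem stmt6_general {k : Type*} [Field k] (p : ℕ) [Fact p.Prime] [CharP k p]
    (D E : Module.End k (TruncA k p))
    (hD : ∀ f, D (tmk k p f) = tmk k p (pderiv 0 f + X 0 ^ (p - 1) * X 1 * pderiv 1 f))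
    (hE : ∀ f, E (tmk k p f) = tmk k p (X 1 * pderiv 1 f)) :
    D ^ p = -E := by
  refine TruncA.linearMap_ext fun a b => ?_
  rw [D_pow_prime_apply_X_zero_pow_mul_X_one_pow hD, LinearMap.neg_apply, hE,
    X_one_mul_pderiv_one_X_zero_pow_mul_X_one_pow, map_nsmul]

/-- For `D = ∂_x + x^{p-1} y ∂_y` on `A = k[x,y]/(x^p,y^p)` in characteristic `p ≥ 5`,
the `p`-fold composition `D^p` equals `-y∂_y`. -/
theorem stmt6 {k : Type*} [Field k] (p : ℕ) [Fact p.Prime] (hp : 5 ≤ p) [CharP k p]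
    (D E : Module.End k (TruncA k p))
    (hD : ∀ f, D (tmk k p f) = tmk k p (pderiv 0 f + X 0 ^ (p - 1) * X 1 * pderiv 1 f))
    (hE : ∀ f, E (tmk k p f) = tmk k p (X 1 * pderiv 1 f)) :
    D ^ p = -E :=
  stmt6_general p D E hD hE
end

section
/- Let k be a field of characteristic p ≥ 5 and A = k[x,y]/(x^p, y^p). Regard A as a module over the Lie algebra Der(A) of all derivations of A (a derivation D acts on f ∈ A by D(f)). Then the only Der(A)-submodules of A are 0, the one-dimensional subspace k·1 of constants, and A itself. Consequently, the quotient module A/(k·1) is a simple Der(A)-module of dimension p² - 1. -/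
/-!
If `V` is stable under all derivations and contains some `f ∉ k·1`, pick a monomial `x^m`
(`m ≠ 0`, exponents `< p`) of maximal total degree in `f`, and a variable `x_l` dividing it.
Applying `∂^(m - e_l)` to `f` leaves an element whose coefficient at `x_l` is a product of
factorials of numbers `< p`, hence nonzero, and whose coefficients in degree `≥ 2` vanish: such a
coefficient either comes from a monomial of `f` of larger degree, or picks up a factor `p`.
The derivation `x_l ∂_l` then extracts a nonzero multiple of `x_l`, and `g ∂_l` maps `x_l` to any
`g`, so `V = A`. The dimension count uses the monomial basis `x^a y^b`, `a, b < p`.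
-/

open MvPolynomial

theorem Nat.cast_ascFactorial_eq_zero_iff {R : Type*} [AddMonoidWithOne R] {p : ℕ} [CharP R p]
    (hp : p.Prime) {a : ℕ} (ha : a < p) (n : ℕ) :
    ((a + 1).ascFactorial n : R) = 0 ↔ p ≤ a + n := by
  rw [CharP.cast_eq_zero_iff R p, ← hp.dvd_factorial, ← Nat.factorial_mul_ascFactorial,
    hp.dvd_mul, or_iff_right (by rwa [hp.dvd_factorial, not_le])]

theorem Finsupp.eq_single_zero_add_single_one {M : Type*} [AddCommMonoid M] (m : Fin 2 →₀ M) :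
    m = Finsupp.single 0 (m 0) + Finsupp.single 1 (m 1) := by
  ext a
  fin_cases a <;> simp

theorem Finsupp.eq_single_one_of_degree_le_one {m : Fin 2 →₀ ℕ} {l : Fin 2} (hl : 1 ≤ m l)
    (hm : m.degree ≤ 1) : m = Finsupp.single l 1 := by
  rw [Finsupp.degree_eq_sum, Fin.sum_univ_two] at hm
  ext i
  fin_cases i <;> fin_cases l <;> simp at hl ⊢ <;> omega

section Quotient

variable {R B : Type*} [CommRing R] [CommRing B] [Algebra R B]

theorem Derivation.apply_mem_span_of_apply_mem (D : Derivation R B B) {S : Set B}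
    (hS : ∀ s ∈ S, D s ∈ Ideal.span S) {x : B} (hx : x ∈ Ideal.span S) :
    D x ∈ Ideal.span S := by
  induction hx using Submodule.span_induction with
  | mem s hs => exact hS s hs
  | zero => simp
  | add x y _ _ hx hy => exact (map_add D x y).symm ▸ Ideal.add_mem _ hx hy
  | smul a x hxS hx =>
    rw [smul_eq_mul, D.leibniz, smul_eq_mul, smul_eq_mul]
    exact Ideal.add_mem _ (Ideal.mul_mem_left _ _ hx) (Ideal.mul_mem_right _ _ hxS)

variable {I : Ideal B}

noncomputable def Derivation.quotient (D : Derivation R B B) (hI : ∀ x ∈ I, D x ∈ I) :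
    Derivation R (B ⧸ I) (B ⧸ I) where
  toLinearMap :=
    Submodule.liftQ (I.restrictScalars R) ((Ideal.Quotient.mkₐ R I).toLinearMap ∘ₗ D.toLinearMap)
      (fun x hx => by simpa [Ideal.Quotient.eq_zero_iff_mem] using hI x hx) ∘ₗ
    (Submodule.Quotient.restrictScalarsEquiv R I).symm.toLinearMap
  map_one_eq_zero' := by
    show Ideal.Quotient.mk I (D 1) = 0
    simp
  leibniz' x y := by
    obtain ⟨x, rfl⟩ := Ideal.Quotient.mk_surjective x
    obtain ⟨y, rfl⟩ := Ideal.Quotient.mk_surjective y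
    show Ideal.Quotient.mk I (D (x * y)) =
      _ • Ideal.Quotient.mk I (D y) + _ • Ideal.Quotient.mk I (D x)
    simp [D.leibniz]

theorem Derivation.quotient_mk (D : Derivation R B B) (hI : ∀ x ∈ I, D x ∈ I) (x : B) :
    D.quotient hI (Ideal.Quotient.mk I x) = Ideal.Quotient.mk I (D x) :=
  rfl

end Quotient

namespace MvPolynomial

variable {σ R : Type*} [CommSemiring R]

theorem coeff_pderiv_iterate (i : σ) (n : ℕ) (f : MvPolynomial σ R) (m : σ →₀ ℕ) :
    coeff m ((pderiv i)^[n] f) =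
      coeff (m + Finsupp.single i n) f * ((m i + 1).ascFactorial n : R) := by
  induction n generalizing f with
  | zero => simp
  | succ n ih =>
    rw [Function.iterate_succ_apply, ih, coeff_pderiv, Nat.ascFactorial_succ, add_assoc,
      ← Finsupp.single_add]
    simp only [Finsupp.coe_add, Pi.add_apply, Finsupp.single_eq_same]
    push_cast
    ring

theorem coeff_pderiv_iterate_pderiv_iterate (n : Fin 2 →₀ ℕ) (f : MvPolynomial (Fin 2) R)
    (m : Fin 2 →₀ ℕ) :
    coeff m ((pderiv 0)^[n 0] ((pderiv 1)^[n 1] f)) =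
      coeff (m + n) f * ∏ i, ((m i + 1).ascFactorial (n i) : R) := by
  rw [coeff_pderiv_iterate, coeff_pderiv_iterate, Fin.prod_univ_two, add_assoc,
    ← Finsupp.eq_single_zero_add_single_one n]
  simp only [Finsupp.coe_add, Pi.add_apply,
    Finsupp.single_eq_of_ne (show (1 : Fin 2) ≠ 0 by decide), add_zero]
  ring

theorem coeff_X_mul_pderiv (i : σ) (f : MvPolynomial σ R) (m : σ →₀ ℕ) :
    coeff m (X i * pderiv i f) = coeff m f * (m i : R) := by
  classical
  rw [coeff_X_mul']
  split_ifs with hi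
  · rw [Finsupp.mem_support_iff, ← Nat.one_le_iff_ne_zero] at hi
    rw [coeff_pderiv, tsub_add_cancel_of_le (Finsupp.single_le_iff.mpr hi), Finsupp.tsub_apply,
      Finsupp.single_eq_same, ← Nat.cast_add_one, Nat.sub_add_cancel hi]
  · rw [Finsupp.notMem_support_iff.mp hi]
    simp

end MvPolynomial

namespace TruncIdeal

variable {k : Type*} [Field k] {p : ℕ}

theorem eq_span_monomial : TruncIdeal k p =
    Ideal.span ((fun s => monomial s (1 : k)) '' {Finsupp.single 0 p, Finsupp.single 1 p}) := by
  rw [Set.image_pair, ← X_pow_eq_monomial, ← X_pow_eq_monomial]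

theorem mem_iff {f : MvPolynomial (Fin 2) k} :
    f ∈ TruncIdeal k p ↔ ∀ m : Fin 2 →₀ ℕ, (∀ i, m i < p) → coeff m f = 0 := by
  rw [eq_span_monomial, mem_ideal_span_monomial_image]
  simp only [Set.mem_insert_iff, Set.mem_singleton_iff, exists_eq_or_imp, exists_eq_left,
    Finsupp.single_le_iff, MvPolynomial.mem_support_iff, Fin.forall_fin_two]
  refine forall_congr' fun m => ?_
  simp only [← not_lt]
  tauto

theorem pderiv_mem [CharP k p] (i : Fin 2) {f : MvPolynomial (Fin 2) k}
    (hf : f ∈ TruncIdeal k p) : pderiv i f ∈ TruncIdeal k p := by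
  refine (pderiv i).apply_mem_span_of_apply_mem ?_ hf
  rintro _ (rfl | rfl) <;> simp

end TruncIdeal

namespace TruncA

variable {k : Type*} [Field k] {p : ℕ}

theorem mk_eq_zero_iff {f : MvPolynomial (Fin 2) k} :
    Ideal.Quotient.mk (TruncIdeal k p) f = 0 ↔
      ∀ m : Fin 2 →₀ ℕ, (∀ i, m i < p) → coeff m f = 0 := by
  rw [Ideal.Quotient.eq_zero_iff_mem, TruncIdeal.mem_iff]

theorem one_ne_zero (hp : 0 < p) : (1 : TruncA k p) ≠ 0 := by
  rw [← map_one (Ideal.Quotient.mk _), Ne, mk_eq_zero_iff]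
  intro h
  simpa using h 0 fun _ => hp

theorem mk_C (c : k) : Ideal.Quotient.mk (TruncIdeal k p) (C c) = c • 1 := by
  rw [← Algebra.algebraMap_eq_smul_one, ← Ideal.Quotient.mk_algebraMap]
  rfl

theorem mk_eq_smul_one {f : MvPolynomial (Fin 2) k}
    (hf : ∀ m : Fin 2 →₀ ℕ, (∀ i, m i < p) → m ≠ 0 → coeff m f = 0) :
    Ideal.Quotient.mk (TruncIdeal k p) f = coeff 0 f • 1 := by
  rw [← mk_C, ← sub_eq_zero, ← map_sub, mk_eq_zero_iff]
  intro m hm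
  rcases eq_or_ne m 0 with rfl | hm0
  · simp
  · rw [coeff_sub, coeff_C, if_neg hm0.symm, sub_zero, hf m hm hm0]

theorem exists_coeff_ne_zero_degree_max {f : MvPolynomial (Fin 2) k}
    (hf : Ideal.Quotient.mk (TruncIdeal k p) f ∉ Submodule.span k {1}) :
    ∃ m₀ : Fin 2 →₀ ℕ, (∀ i, m₀ i < p) ∧ m₀ ≠ 0 ∧ coeff m₀ f ≠ 0 ∧
      ∀ m : Fin 2 →₀ ℕ, (∀ i, m i < p) → coeff m f ≠ 0 → m.degree ≤ m₀.degree := by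
  set S := f.support.filter fun m => ∀ i, m i < p
  have hS : ∃ m ∈ S, m ≠ 0 := by
    by_contra! h
    refine hf (Submodule.mem_span_singleton.mpr ⟨coeff 0 f, (mk_eq_smul_one ?_).symm⟩)
    intro m hm hm0
    by_contra hc
    exact hm0 (h m (Finset.mem_filter.mpr ⟨MvPolynomial.mem_support_iff.mpr hc, hm⟩))
  obtain ⟨m₁, hm₁S, hm₁⟩ := hS
  obtain ⟨m₀, hm₀S, hmax⟩ := S.exists_max_image Finsupp.degree ⟨m₁, hm₁S⟩
  rw [Finset.mem_filter, MvPolynomial.mem_support_iff] at hm₀S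
  refine ⟨m₀, hm₀S.2, ?_, hm₀S.1, fun m hm hc => hmax m ?_⟩
  · rintro rfl
    have := hmax m₁ hm₁S
    rw [map_zero, Nat.le_zero, Finsupp.degree_eq_zero_iff] at this
    exact hm₁ this
  · exact Finset.mem_filter.mpr ⟨MvPolynomial.mem_support_iff.mpr hc, hm⟩

theorem coeff_pderiv_iterate_of_degree_max [CharP k p] (hp : p.Prime)
    {f : MvPolynomial (Fin 2) k} {m₀ : Fin 2 →₀ ℕ} (hm₀ : ∀ i, m₀ i < p) (hf : coeff m₀ f ≠ 0)
    (hmax : ∀ m : Fin 2 →₀ ℕ, (∀ i, m i < p) → coeff m f ≠ 0 → m.degree ≤ m₀.degree)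
    {l : Fin 2} {n : Fin 2 →₀ ℕ} (hn : Finsupp.single l 1 + n = m₀) :
    coeff (Finsupp.single l 1) ((pderiv 0)^[n 0] ((pderiv 1)^[n 1] f)) ≠ 0 ∧
      ∀ m : Fin 2 →₀ ℕ, (∀ i, m i < p) → 2 ≤ m.degree →
        coeff m ((pderiv 0)^[n 0] ((pderiv 1)^[n 1] f)) = 0 := by
  refine ⟨?_, fun m hm hdeg => ?_⟩
  · rw [coeff_pderiv_iterate_pderiv_iterate, hn]
    refine mul_ne_zero hf (Finset.prod_ne_zero_iff.mpr fun i _ => ?_)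
    have hni := congrArg (· i) hn
    have hm₀i := hm₀ i
    simp only [Finsupp.coe_add, Pi.add_apply] at hni
    rw [Ne, Nat.cast_ascFactorial_eq_zero_iff hp (by omega)]
    omega
  · rw [coeff_pderiv_iterate_pderiv_iterate]
    by_cases hsmall : ∀ i, m i + n i < p
    · have hdeg' : m₀.degree < (m + n).degree := by
        rw [← hn, map_add, map_add, Finsupp.degree_single]
        omega
      by_contra hc
      exact absurd (hmax (m + n) hsmall (left_ne_zero_of_mul hc)) (not_le.mpr hdeg')
    · simp only [not_forall, not_lt] at hsmall
      obtain ⟨i, hi⟩ := hsmall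
      rw [Finset.prod_eq_zero (Finset.mem_univ i)
        ((Nat.cast_ascFactorial_eq_zero_iff hp (hm i) _).mpr hi), mul_zero]

theorem mk_X_mul_pderiv {g : MvPolynomial (Fin 2) k}
    (hg : ∀ m : Fin 2 →₀ ℕ, (∀ i, m i < p) → 2 ≤ m.degree → coeff m g = 0) (l : Fin 2) :
    Ideal.Quotient.mk (TruncIdeal k p) (X l * pderiv l g) =
      coeff (Finsupp.single l 1) g • Ideal.Quotient.mk (TruncIdeal k p) (X l) := by
  rw [← sub_eq_zero, ← Ideal.Quotient.mkₐ_eq_mk k, ← map_smul, ← map_sub,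
    Ideal.Quotient.mkₐ_eq_mk, mk_eq_zero_iff]
  intro m hm
  rw [coeff_sub, coeff_X_mul_pderiv, coeff_smul, coeff_X, smul_eq_mul, sub_eq_zero]
  split_ifs with hml
  · simp [← hml]
  · rw [mul_zero]
    rcases Nat.eq_zero_or_pos (m l) with hl | hl
    · simp [hl]
    · rw [hg m hm (not_le.mp fun h => hml (Finsupp.eq_single_one_of_degree_le_one hl h).symm),
        zero_mul]

variable [CharP k p]

noncomputable def pderiv (i : Fin 2) : Derivation k (TruncA k p) (TruncA k p) :=
  (MvPolynomial.pderiv i).quotient fun _ => TruncIdeal.pderiv_mem i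

theorem pderiv_mk (i : Fin 2) (f : MvPolynomial (Fin 2) k) :
    pderiv i (Ideal.Quotient.mk (TruncIdeal k p) f) =
      Ideal.Quotient.mk (TruncIdeal k p) (MvPolynomial.pderiv i f) :=
  (MvPolynomial.pderiv i).quotient_mk _ f

theorem pderiv_iterate_mk (i : Fin 2) (n : ℕ) (f : MvPolynomial (Fin 2) k) :
    (pderiv i)^[n] (Ideal.Quotient.mk (TruncIdeal k p) f) =
      Ideal.Quotient.mk (TruncIdeal k p) ((MvPolynomial.pderiv i)^[n] f) :=
  (Function.Semiconj.iterate_right (fun f => (pderiv_mk i f).symm) n f).symm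

section Invariant

variable {V : Submodule k (TruncA k p)}
  (hV : ∀ D : Derivation k (TruncA k p) (TruncA k p), ∀ v ∈ V, D v ∈ V)
include hV

theorem eq_top_of_mk_X_mem {l : Fin 2} (hl : Ideal.Quotient.mk (TruncIdeal k p) (X l) ∈ V) :
    V = ⊤ := by
  refine Submodule.eq_top_iff'.mpr fun a => ?_
  have := hV (a • pderiv l) _ hl
  rwa [Derivation.smul_apply, pderiv_mk, MvPolynomial.pderiv_X_self, map_one, smul_eq_mul,
    mul_one] at this

theorem mk_pderiv_iterate_mem {f : MvPolynomial (Fin 2) k}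
    (hf : Ideal.Quotient.mk (TruncIdeal k p) f ∈ V) (i : Fin 2) (n : ℕ) :
    Ideal.Quotient.mk (TruncIdeal k p) ((MvPolynomial.pderiv i)^[n] f) ∈ V := by
  rw [← pderiv_iterate_mk]
  exact Set.MapsTo.iterate (fun v hv => hV (pderiv i) v hv) n hf

theorem exists_mk_X_mem (hp : p.Prime) {f : MvPolynomial (Fin 2) k}
    (hfV : Ideal.Quotient.mk (TruncIdeal k p) f ∈ V)
    (hf : Ideal.Quotient.mk (TruncIdeal k p) f ∉ Submodule.span k {1}) :
    ∃ l, Ideal.Quotient.mk (TruncIdeal k p) (X l) ∈ V := by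
  obtain ⟨m₀, hm₀, hm₀0, hfm₀, hmax⟩ := exists_coeff_ne_zero_degree_max hf
  obtain ⟨l, hl⟩ := Finsupp.ne_iff.mp hm₀0
  set n := m₀ - Finsupp.single l 1
  have hn : Finsupp.single l 1 + n = m₀ :=
    add_tsub_cancel_of_le (Finsupp.single_le_iff.mpr (Nat.one_le_iff_ne_zero.mpr hl))
  obtain ⟨hgl, hg⟩ := coeff_pderiv_iterate_of_degree_max hp hm₀ hfm₀ hmax hn
  have hgV := mk_pderiv_iterate_mem hV (mk_pderiv_iterate_mem hV hfV 1 (n 1)) 0 (n 0)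
  have hXl := hV (Ideal.Quotient.mk (TruncIdeal k p) (X l) • pderiv l) _ hgV
  rw [Derivation.smul_apply, pderiv_mk, smul_eq_mul, ← map_mul, mk_X_mul_pderiv hg] at hXl
  exact ⟨l, (Submodule.smul_mem_iff V hgl).mp hXl⟩

theorem eq_bot_or_eq_span_one_or_eq_top (hp : p.Prime) :
    V = ⊥ ∨ V = Submodule.span k {1} ∨ V = ⊤ := by
  by_cases hle : V ≤ Submodule.span k {1}
  · rw [← or_assoc]
    exact Or.inl ((nonzero_span_atom 1 (one_ne_zero hp.pos)).le_iff.mp hle)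
  · obtain ⟨v, hvV, hv⟩ := SetLike.not_le_iff_exists.mp hle
    obtain ⟨f, rfl⟩ := Ideal.Quotient.mk_surjective v
    obtain ⟨l, hl⟩ := exists_mk_X_mem hV hp hvV hv
    exact Or.inr (Or.inr (eq_top_of_mk_X_mem hV hl))

end Invariant

end TruncA

namespace TruncA

variable {k : Type*} [Field k] {p : ℕ}

variable (k p) in
noncomputable def boxCoeffs : MvPolynomial (Fin 2) k →ₗ[k] ((Fin 2 → Fin p) → k) :=
  LinearMap.pi fun q => lcoeff k (Finsupp.equivFunOnFinite.symm fun i => (q i : ℕ))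

theorem ker_boxCoeffs : LinearMap.ker (boxCoeffs k p) = (TruncIdeal k p).restrictScalars k := by
  ext f
  rw [LinearMap.mem_ker, Submodule.restrictScalars_mem, TruncIdeal.mem_iff, funext_iff]
  refine ⟨fun h m hm => ?_, fun h q => h _ fun i => by simp⟩
  simpa [boxCoeffs] using h fun i => ⟨m i, hm i⟩

theorem boxCoeffs_surjective : Function.Surjective (boxCoeffs k p) := by
  have hinj : Function.Injective fun q : Fin 2 → Fin p =>
      Finsupp.equivFunOnFinite.symm fun i => (q i : ℕ) :=
    Finsupp.equivFunOnFinite.symm.injective.comp fun q q' h =>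
      funext fun i => Fin.val_injective (congrFun h i)
  intro c
  refine ⟨∑ q, monomial (Finsupp.equivFunOnFinite.symm fun i => (q i : ℕ)) (c q),
    funext fun r => ?_⟩
  simp [boxCoeffs, coeff_monomial, hinj.eq_iff]

variable (k p) in
noncomputable def equivBoxFun : TruncA k p ≃ₗ[k] ((Fin 2 → Fin p) → k) :=
  (Submodule.Quotient.restrictScalarsEquiv k (TruncIdeal k p)).symm ≪≫ₗ
    Submodule.quotEquivOfEq _ _ ker_boxCoeffs.symm ≪≫ₗ
    (boxCoeffs k p).quotKerEquivOfSurjective boxCoeffs_surjective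

instance : Module.Finite k (TruncA k p) :=
  .equiv (equivBoxFun k p).symm

theorem finrank_eq : Module.finrank k (TruncA k p) = p ^ 2 := by
  rw [(equivBoxFun k p).finrank_eq, Module.finrank_fintype_fun_eq_card, Fintype.card_fun,
    Fintype.card_fin, Fintype.card_fin]

theorem finrank_quotient_span_one (hp : 0 < p) :
    Module.finrank k (TruncA k p ⧸ Submodule.span k {(1 : TruncA k p)}) = p ^ 2 - 1 := by
  have := Submodule.finrank_quotient_add_finrank (Submodule.span k {(1 : TruncA k p)})
  rw [finrank_eq, finrank_span_singleton (one_ne_zero hp)] at this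
  omega

end TruncA

theorem stmt14_general {k : Type*} [Field k] (p : ℕ) [Fact p.Prime] [CharP k p] :
    (∀ V : Submodule k (TruncA k p),
      (∀ D : Derivation k (TruncA k p) (TruncA k p), ∀ v ∈ V, D v ∈ V) →
      V = ⊥ ∨ V = Submodule.span k {(1 : TruncA k p)} ∨ V = ⊤) ∧
    Module.finrank k (TruncA k p ⧸ Submodule.span k {(1 : TruncA k p)}) = p ^ 2 - 1 :=
  ⟨fun _ hV => TruncA.eq_bot_or_eq_span_one_or_eq_top hV Fact.out,
    TruncA.finrank_quotient_span_one (Fact.out : p.Prime).pos⟩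

/-- The only `Der(A)`-submodules of `A = k[x,y]/(x^p,y^p)` (char `p ≥ 5`) are `0`,
the constants `k·1`, and `A`; consequently `A/(k·1)` is a simple `Der(A)`-module of
dimension `p² - 1`. -/
theorem stmt14 {k : Type*} [Field k] (p : ℕ) [Fact p.Prime] (hp : 5 ≤ p) [CharP k p] :
    (∀ V : Submodule k (TruncA k p),
      (∀ D : Derivation k (TruncA k p) (TruncA k p), ∀ v ∈ V, D v ∈ V) →
      V = ⊥ ∨ V = Submodule.span k {(1 : TruncA k p)} ∨ V = ⊤) ∧
    Module.finrank k (TruncA k p ⧸ Submodule.span k {(1 : TruncA k p)}) = p ^ 2 - 1 :=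
  stmt14_general p
end

section
/- Let k be a field of characteristic p ≥ 5. The Witt algebra W(1;1) = Der(k[t]/(t^p)) is a simple Lie algebra (of dimension p). -/
set_option synthInstance.maxHeartbeats 1000000
set_option maxHeartbeats 1000000

/-- The truncated polynomial ring `k[t]/(t^p)` in one variable. -/
noncomputable abbrev TruncB (k : Type*) [Field k] (p : ℕ) :=
  Polynomial k ⧸ Ideal.span {(Polynomial.X : Polynomial k) ^ p}

/-!
Every derivation `D` of `A = k[t]/(t^p)` equals `D(t) ∂`, so `W(1;1) ≅ A` is `p`-dimensional, and
`[t^a ∂, t^b ∂] = (b - a) t^(a+b-1) ∂`. A nonzero ideal contains some `f ∂ ≠ 0`; if `f` has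
degree `d < p`, then `(ad ∂)^d (f ∂) = d! · lc(f) · ∂` is a nonzero multiple of `∂`. Bracketing
`∂` with `t^(i+1) ∂` yields `t^i ∂` for `i ≤ p - 2`, and `[t² ∂, t^(p-2) ∂] = -4 t^(p-1) ∂`
yields the last basis vector, as `p` is odd.
-/

open Polynomial

theorem Polynomial.iterate_derivative_natDegree {R : Type*} [Semiring R] (q : R[X]) :
    derivative^[q.natDegree] q = C (q.natDegree.factorial • q.leadingCoeff) := by
  have hdeg : (derivative^[q.natDegree] q).natDegree = 0 :=
    Nat.le_zero.1 ((natDegree_iterate_derivative q _).trans_eq (Nat.sub_self _))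
  rw [eq_C_of_natDegree_eq_zero hdeg, coeff_iterate_derivative, zero_add, Nat.descFactorial_self]
  rfl

namespace TruncB

variable {k : Type*} [Field k] {p : ℕ}

local notation "𝒲" => Derivation k (TruncB k p) (TruncB k p)

noncomputable def mk : k[X] →ₐ[k] TruncB k p := Ideal.Quotient.mkₐ k _

noncomputable def t : TruncB k p := mk X

theorem mk_surjective : Function.Surjective (mk : k[X] → TruncB k p) :=
  Ideal.Quotient.mkₐ_surjective k _

theorem mk_eq_zero_iff {q : k[X]} : mk q = (0 : TruncB k p) ↔ X ^ p ∣ q :=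
  Ideal.Quotient.eq_zero_iff_mem.trans Ideal.mem_span_singleton

theorem aeval_t (q : k[X]) : aeval (t : TruncB k p) q = mk q := by
  rw [t, aeval_algHom_apply, aeval_X_left_apply]

theorem t_pow_eq_zero {i : ℕ} (hi : p ≤ i) : (t : TruncB k p) ^ i = 0 := by
  rw [t, ← map_pow, mk_eq_zero_iff]
  exact pow_dvd_pow X hi

theorem exists_degree_lt (f : TruncB k p) : ∃ q : k[X], q.degree < p ∧ mk q = f := by
  obtain ⟨q, rfl⟩ := mk_surjective f
  refine ⟨q %ₘ X ^ p, ?_, ?_⟩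
  · simpa using degree_modByMonic_lt q (monic_X_pow p)
  · conv_rhs => rw [← modByMonic_add_div q (X ^ p)]
    rw [map_add, mk_eq_zero_iff.2 (dvd_mul_right _ _), add_zero]

theorem nontrivial (hp : p ≠ 0) : Nontrivial (TruncB k p) := by
  refine ⟨0, 1, fun h => ?_⟩
  rw [eq_comm, ← map_one mk, mk_eq_zero_iff] at h
  exact not_isUnit_X ((isUnit_pow_iff hp).1 (isUnit_of_dvd_one h))

theorem derivation_ext {D E : 𝒲} (h : D t = E t) : D = E := by
  ext f
  obtain ⟨q, rfl⟩ := mk_surjective f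
  rw [← aeval_t, Derivation.map_aeval, Derivation.map_aeval, h]

variable [CharP k p]

/-- `d/dX` preserves `(X ^ p)` because `(X ^ p)' = p X ^ (p - 1) = 0`. -/
noncomputable def deriv : 𝒲 :=
  Derivation.liftOfSurjective mk_surjective (d := derivative') fun q hq => by
    rw [mk_eq_zero_iff] at hq ⊢
    obtain ⟨r, rfl⟩ := hq
    simp

theorem deriv_mk (q : k[X]) : deriv (mk q : TruncB k p) = mk (derivative q) := by
  simp [deriv]

local notation "∂" => (deriv : Derivation k (TruncB k p) (TruncB k p))

theorem deriv_t : ∂ (t : TruncB k p) = 1 := by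
  rw [t, deriv_mk, derivative_X, map_one]

theorem deriv_t_pow (n : ℕ) : ∂ ((t : TruncB k p) ^ n) = (n : k) • t ^ (n - 1) := by
  rw [Derivation.leibniz_pow, deriv_t, smul_eq_mul, mul_one, Nat.cast_smul_eq_nsmul]

theorem smul_deriv_apply_t (f : TruncB k p) : (f • ∂ : 𝒲) t = f := by
  rw [Derivation.smul_apply, deriv_t, smul_eq_mul, mul_one]

theorem eq_smul_deriv (D : 𝒲) : D = D t • ∂ :=
  derivation_ext (smul_deriv_apply_t _).symm

noncomputable def derivationEquiv : 𝒲 ≃ₗ[TruncB k p] TruncB k p where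
  toFun D := D t
  map_add' _ _ := rfl
  map_smul' _ _ := rfl
  invFun f := f • ∂
  left_inv D := (eq_smul_deriv D).symm
  right_inv := smul_deriv_apply_t

theorem finrank_derivation : Module.finrank k 𝒲 = p := by
  rw [(derivationEquiv.restrictScalars k).finrank_eq]
  exact (AdjoinRoot.powerBasis (pow_ne_zero p (X_ne_zero (R := k)))).finrank.trans
    (natDegree_X_pow p)

theorem lie_smul_deriv (f g : TruncB k p) :
    ⁅(f • ∂ : 𝒲), g • ∂⁆ = (f * ∂ g - g * ∂ f) • ∂ :=
  derivation_ext (by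
    rw [Derivation.commutator_apply, smul_deriv_apply_t, smul_deriv_apply_t,
      Derivation.smul_apply, Derivation.smul_apply, smul_deriv_apply_t, smul_eq_mul, smul_eq_mul])

theorem lie_deriv_smul (g : TruncB k p) : ⁅∂, g • ∂⁆ = ∂ g • ∂ := by
  simpa using lie_smul_deriv 1 g

theorem iterate_lie_deriv_smul (f : TruncB k p) (m : ℕ) :
    (fun D : 𝒲 ↦ ⁅∂, D⁆)^[m] (f • ∂) = (∂^[m] f) • ∂ := by
  induction m with
  | zero => rfl
  | succ m ih =>
    rw [Function.iterate_succ_apply', ih, lie_deriv_smul, ← Function.iterate_succ_apply' ∂]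

theorem iterate_deriv_mk (q : k[X]) (m : ℕ) :
    ∂^[m] (mk q : TruncB k p) = mk (derivative^[m] q) := by
  induction m with
  | zero => rfl
  | succ m ih =>
    rw [Function.iterate_succ_apply', ih, deriv_mk, ← Function.iterate_succ_apply' derivative]

theorem lie_t_pow_smul_deriv (a b : ℕ) :
    ⁅(t : TruncB k p) ^ a • ∂, (t : TruncB k p) ^ b • ∂⁆ =
      ((b : k) - a) • (t : TruncB k p) ^ (a + b - 1) • ∂ := by
  have key : ∀ a b : ℕ, (t : TruncB k p) ^ a * ∂ (t ^ b) = (b : k) • t ^ (a + b - 1) := by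
    rintro a (_ | b)
    · simp
    · rw [deriv_t_pow, mul_smul_comm, ← pow_add, Nat.add_sub_cancel, Nat.add_succ_sub_one]
  rw [lie_smul_deriv, key, key, add_comm b, ← sub_smul, smul_assoc]

variable [Fact p.Prime]

theorem exists_iterate_deriv_eq_algebraMap {f : TruncB k p} (hf : f ≠ 0) :
    ∃ m : ℕ, ∃ c : k, c ≠ 0 ∧ ∂^[m] f = algebraMap k _ c := by
  obtain ⟨q, hq, rfl⟩ := exists_degree_lt f
  have hq0 : q ≠ 0 := by
    rintro rfl
    exact hf (map_zero _)
  have hlt : q.natDegree < p := (natDegree_lt_iff_degree_lt hq0).2 hq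
  have hfact : (q.natDegree.factorial : k) ≠ 0 := by
    rw [Ne, CharP.cast_eq_zero_iff k p, Nat.Prime.dvd_factorial Fact.out, not_le]
    exact hlt
  refine ⟨q.natDegree, q.natDegree.factorial • q.leadingCoeff, ?_, ?_⟩
  · rw [nsmul_eq_mul]
    exact mul_ne_zero hfact (leadingCoeff_ne_zero.2 hq0)
  · rw [iterate_deriv_mk, iterate_derivative_natDegree]
    exact mk.commutes _

variable {I : LieIdeal k (Derivation k (TruncB k p) (TruncB k p))}

theorem deriv_mem_of_ne_bot (hI : I ≠ ⊥) : ∂ ∈ I := by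
  obtain ⟨D, hDI, hD0⟩ : ∃ D : 𝒲, D ∈ I ∧ D ≠ 0 := by
    simpa only [Ne, LieSubmodule.eq_bot_iff, not_forall, exists_prop] using hI
  have hf : D t ≠ 0 := fun h => hD0 (derivation_ext (by rw [h, Derivation.zero_apply]))
  obtain ⟨m, c, hc, hmc⟩ := exists_iterate_deriv_eq_algebraMap hf
  have hcI : c • ∂ ∈ I := by
    rw [← algebraMap_smul (TruncB k p), ← hmc, ← iterate_lie_deriv_smul, ← eq_smul_deriv D]
    exact Set.MapsTo.iterate (fun _ h => I.lie_mem h) m hDI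
  exact (I.toSubmodule.smul_mem_iff hc).1 hcI

theorem t_pow_smul_deriv_mem (hp : p ≠ 2) (h : ∂ ∈ I) (i : ℕ) :
    (t : TruncB k p) ^ i • ∂ ∈ I := by
  have hp2 : 2 ≤ p := (Fact.out : p.Prime).two_le
  have hlow : ∀ i, i + 1 < p → (t : TruncB k p) ^ i • ∂ ∈ I := by
    intro i hi
    have hbr := I.lie_mem (x := (t : TruncB k p) ^ (i + 1) • ∂)
      (m := (t : TruncB k p) ^ 0 • ∂) (by rwa [pow_zero, one_smul])
    rw [lie_t_pow_smul_deriv, Nat.add_zero, Nat.add_sub_cancel] at hbr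
    refine (I.toSubmodule.smul_mem_iff ?_).1 hbr
    rw [Nat.cast_zero, zero_sub, neg_ne_zero, Ne, CharP.cast_eq_zero_iff k p]
    exact Nat.not_dvd_of_pos_of_lt i.succ_pos hi
  rcases lt_trichotomy (i + 1) p with hi | hi | hi
  · exact hlow i hi
  · have hbr := I.lie_mem (x := (t : TruncB k p) ^ 2 • ∂) (hlow (p - 2) (by omega))
    rw [lie_t_pow_smul_deriv, show 2 + (p - 2) - 1 = i by omega] at hbr
    refine (I.toSubmodule.smul_mem_iff ?_).1 hbr
    have h2 : ((2 : ℕ) : k) ≠ 0 := CharP.cast_ne_zero_of_ne_of_prime k Nat.prime_two hp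
    rw [Nat.cast_sub hp2, CharP.cast_eq_zero, zero_sub, ← neg_add', neg_ne_zero, ← two_mul]
    exact mul_ne_zero (mod_cast h2) h2
  · rw [t_pow_eq_zero (by omega)]
    exact zero_smul (TruncB k p) ∂ ▸ I.zero_mem

theorem eq_top_of_deriv_mem (hp : p ≠ 2) (h : ∂ ∈ I) : I = ⊤ := by
  have haeval : ∀ q : k[X], aeval (t : TruncB k p) q • ∂ ∈ I := by
    intro q
    induction q using Polynomial.induction_on' with
    | add q r hq hr => rw [map_add, add_smul]; exact add_mem hq hr
    | monomial n c =>
      rw [aeval_monomial, ← Algebra.smul_def, smul_assoc]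
      exact I.smul_mem c (t_pow_smul_deriv_mem hp h n)
  rw [eq_top_iff]
  rintro D -
  obtain ⟨q, hq⟩ := mk_surjective (D t)
  rw [eq_smul_deriv D, ← hq, ← aeval_t]
  exact haeval q

theorem isSimple_derivation (hp : p ≠ 2) : LieAlgebra.IsSimple k 𝒲 where
  eq_bot_or_eq_top _ :=
    or_iff_not_imp_left.2 fun hI => eq_top_of_deriv_mem hp (deriv_mem_of_ne_bot hI)
  non_abelian _ := by
    have := nontrivial (k := k) (Fact.out : p.Prime).ne_zero
    have hzero : ∂ = 0 := by
      rw [← trivial_lie_zero 𝒲 𝒲 ∂ ((t : TruncB k p) • ∂), lie_deriv_smul, deriv_t, one_smul]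
    exact one_ne_zero (by rw [← deriv_t, hzero, Derivation.zero_apply] : (1 : TruncB k p) = 0)

end TruncB

theorem stmt15_general {k : Type*} [Field k] (p : ℕ) (hp : 5 ≤ p) [CharP k p] :
    LieAlgebra.IsSimple k (Derivation k (TruncB k p) (TruncB k p)) ∧
    Module.finrank k (Derivation k (TruncB k p) (TruncB k p)) = p := by
  have : NeZero p := ⟨by omega⟩
  have : Fact p.Prime := CharP.char_is_prime_of_pos k p
  exact ⟨TruncB.isSimple_derivation (by omega), TruncB.finrank_derivation⟩

/-- The Witt algebra `W(1;1) = Der(k[t]/(t^p))` over a field of characteristic `p ≥ 5`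
is a simple Lie algebra of dimension `p`. -/
theorem stmt15 {k : Type*} [Field k] (p : ℕ) [Fact p.Prime] (hp : 5 ≤ p) [CharP k p] :
    LieAlgebra.IsSimple k (Derivation k (TruncB k p) (TruncB k p)) ∧
    Module.finrank k (Derivation k (TruncB k p) (TruncB k p)) = p :=
  stmt15_general p hp
end
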